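/- arXiv:2601.23170 — 3 statements merged into one kernel-verified Lean document; each statement's English description precedes it below -/
import Mathlib

section
/- Define T(n,s,i) as the number of s-element subsets γ = {γ₁ < ... < γ_s} of {1,...,n} with exactly i indices j satisfying γⱼ ≠ 2j. Then for 0 < i ≤ s ≤ ⌊(n-1)/2⌋, T(n,s,i) = T(n-1,s,i) + T(n-1,s-1,i-1). -/
/-!
Split the `s`-subsets of `{1,…,n}` according to whether they contain `n`. Those that do not are
exactly the `s`-subsets of `{1,…,n-1}`, with the same marks. Those that do are `insert n γ'` for
an `(s-1)`-subset `γ'` of `{1,…,n-1}`; the new mark `n` comes last, in position `s`, and is not at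
home because `2s < n`, so it adds exactly one mark not at home.
-/

/-- Number of marks not at home: indices `j` (0-indexed) with `γⱼ₊₁ ≠ 2(j+1)`. -/
def natCount (γ : Finset ℕ) : ℕ :=
  ((Finset.range γ.card).filter fun j => (γ.sort (· ≤ ·)).getD j 0 ≠ 2 * (j + 1)).card

/-- `T n s i` counts the `s`-element subsets of `{1,…,n}` with exactly `i` marks not at home. -/
def T (n s i : ℕ) : ℕ :=
  (((Finset.Icc 1 n).powersetCard s).filter fun γ => natCount γ = i).card

open Finset

lemma Finset.sort_insert_of_forall_lt {α : Type*} [LinearOrder α] {γ : Finset α} {a : α} (ha : ∀ x ∈ γ, x < a) :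
    (insert a γ).sort (· ≤ ·) = γ.sort (· ≤ ·) ++ [a] := by
  have ha' : a ∉ γ := fun h => (ha a h).false
  have hperm : ((insert a γ).sort (· ≤ ·)).Perm (γ.sort (· ≤ ·) ++ [a]) :=
    ((sort_perm_toList _ _).trans (toList_insert ha')).trans
      (((sort_perm_toList _ _).symm.cons a).trans (List.perm_append_singleton _ _).symm)
  refine List.Perm.eq_of_pairwise' (pairwise_sort _ _) ?_ hperm
  refine List.pairwise_append.mpr ⟨pairwise_sort _ _, List.pairwise_singleton _ a, ?_⟩
  intro x hx y hy
  obtain rfl := List.mem_singleton.mp hy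
  exact (ha x ((mem_sort _).mp hx)).le

lemma natCount_insert_of_forall_lt {γ : Finset ℕ} {a : ℕ} (ha : ∀ x ∈ γ, x < a)
    (hhome : a ≠ 2 * (#γ + 1)) : natCount (insert a γ) = natCount γ + 1 := by
  have ha' : a ∉ γ := fun h => (ha a h).false
  have hlen : (γ.sort (· ≤ ·)).length = #γ := length_sort _
  have hlast : (γ.sort (· ≤ ·) ++ [a]).getD #γ 0 = a := by
    simp [List.getD_eq_getElem?_getD, hlen]
  unfold natCount
  rw [card_insert_of_notMem ha', sort_insert_of_forall_lt ha, range_add_one, filter_insert,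
    if_pos (by rwa [hlast]), card_insert_of_notMem (by simp)]
  congr 1
  refine congrArg card (filter_congr fun j hj => ?_)
  rw [List.getD_append _ _ _ _ (hlen ▸ mem_range.mp hj)]

lemma T_succ (m s i : ℕ) (hhome : m + 1 ≠ 2 * (s + 1)) :
    T (m + 1) (s + 1) (i + 1) = T m (s + 1) (i + 1) + T m s i := by
  have hm : m + 1 ∉ Icc 1 m := by simp
  have hinsert : ∀ γ ∈ powersetCard s (Icc 1 m),
      natCount (insert (m + 1) γ) = i + 1 ↔ natCount γ = i := by
    intro γ hγ
    obtain ⟨hsub, hcard⟩ := mem_powersetCard.mp hγ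
    have hlt : ∀ x ∈ γ, x < m + 1 := fun x hx => Nat.lt_succ_of_le (mem_Icc.mp (hsub hx)).2
    rw [natCount_insert_of_forall_lt hlt (hcard ▸ hhome), Nat.add_right_cancel_iff]
  have hinj : Set.InjOn (insert (m + 1)) (powersetCard s (Icc 1 m) : Set (Finset ℕ)) := by
    refine insert_erase_invOn.2.injOn.mono ?_
    intro γ hγ h
    exact hm ((mem_powersetCard.mp hγ).1 h)
  unfold T
  rw [← insert_Icc_right_eq_Icc_add_one (by omega), powersetCard_succ_insert hm, filter_union,
    card_union_of_disjoint, filter_image, card_image_of_injOn (hinj.mono (filter_subset _ _)),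
    filter_congr hinsert]
  refine disjoint_filter_filter (disjoint_left.mpr fun γ hγ hγ' => ?_)
  obtain ⟨γ', -, rfl⟩ := mem_image.mp hγ'
  exact hm ((mem_powersetCard.mp hγ).1 (mem_insert_self _ _))

theorem stmt3 (n s i : ℕ) (h0 : 0 < i) (h1 : i ≤ s) (h2 : s ≤ (n - 1) / 2) :
    T n s i = T (n - 1) s i + T (n - 1) (s - 1) (i - 1) := by
  obtain ⟨i, rfl⟩ := Nat.exists_eq_add_of_lt h0
  obtain ⟨s, rfl⟩ : ∃ s', s = s' + 1 := ⟨s - 1, by omega⟩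
  obtain ⟨m, rfl⟩ : ∃ m, n = m + 1 := ⟨n - 1, by omega⟩
  simpa using T_succ m s i (by omega)
end

section
/- Define T(n,s,i) as the number of s-element subsets γ = {γ₁ < ... < γ_s} of {1,...,n} with exactly i indices j satisfying γⱼ ≠ 2j. Then for i ≥ 1, T(2i, i, i) = T(2i-1, i-1, i-1). -/
/-!
Read `γ ⊆ {1, …, n}` as a lattice path with an up-step at each element of `γ` and a down-step
elsewhere; the `j`-th mark `x` is at home exactly when the path is back at height `0` at time `x`.
Reflecting the path after its last visit to height `0` in `[0, n]` is an involution that keeps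
every mark away from home and turns `s` marks into `n - s`. For `n = 2i - 1` it exchanges `i` and
`i - 1` marks, and a configuration of `i` marks in `{1, …, 2i}` with none at home cannot use `2i`,
which would be its `i`-th mark.
-/

open Finset

theorem Finset.card_filter_le_orderEmbOfFin {α : Type*} [LinearOrder α] (s : Finset α) {k : ℕ}
    (h : s.card = k) (j : Fin k) : #{y ∈ s | y ≤ s.orderEmbOfFin h j} = j + 1 := by
  have : {y ∈ s | y ≤ s.orderEmbOfFin h j} = (Iic j).map (s.orderEmbOfFin h).toEmbedding := by
    ext y
    rw [mem_filter, ← mem_coe, ← s.range_orderEmbOfFin h, mem_map]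
    constructor
    · rintro ⟨⟨a, rfl⟩, ha⟩
      exact ⟨a, mem_Iic.2 ((s.orderEmbOfFin h).le_iff_le.1 ha), rfl⟩
    · rintro ⟨a, ha, rfl⟩
      exact ⟨⟨a, rfl⟩, (s.orderEmbOfFin h).le_iff_le.2 (mem_Iic.1 ha)⟩
  rw [this, card_map, Fin.card_Iic]

namespace Configuration

lemma natCount_eq_card_filter (γ : Finset ℕ) :
    natCount γ = #{x ∈ γ | x ≠ 2 * #{y ∈ γ | y ≤ x}} := by
  set f := γ.orderEmbOfFin rfl
  have hrange : range γ.card = univ.map (Fin.valEmbedding (n := γ.card)) := by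
    rw [Fin.map_valEmbedding_univ, Nat.Iio_eq_range]
  rw [natCount, hrange, filter_map, card_map]
  refine card_bij (fun j _ => f j) (fun j hj => ?_) (fun a _ b _ hab => f.injective hab) ?_
  · simp only [mem_filter, mem_univ, true_and, Function.comp_apply, Fin.valEmbedding_apply] at hj
    rw [List.getD_eq_getElem _ _ (by simp)] at hj
    refine mem_filter.2 ⟨γ.orderEmbOfFin_mem rfl j, ?_⟩
    rw [γ.card_filter_le_orderEmbOfFin]
    exact hj
  · intro x hx
    rw [mem_filter, ← mem_coe, ← γ.range_orderEmbOfFin rfl] at hx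
    obtain ⟨⟨j, rfl⟩, hj⟩ := hx
    refine ⟨j, ?_, rfl⟩
    simp only [mem_filter, mem_univ, true_and, Function.comp_apply, Fin.valEmbedding_apply]
    rw [List.getD_eq_getElem _ _ (by simp)]
    rwa [γ.card_filter_le_orderEmbOfFin] at hj

/-- The height after `m` steps of the lattice path that steps up at the elements of `γ` and
down elsewhere. -/
def level (γ : Finset ℕ) (m : ℕ) : ℤ := ∑ x ∈ Ioc 0 m, if x ∈ γ then 1 else -1

lemma level_zero (γ : Finset ℕ) : level γ 0 = 0 := by simp [level]

lemma level_eq_two_mul_card_sub {γ : Finset ℕ} (hγ : 0 ∉ γ) (m : ℕ) :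
    level γ m = 2 * #{y ∈ γ | y ≤ m} - m := by
  have hfilter : {y ∈ γ | y ≤ m} = {x ∈ Ioc 0 m | x ∈ γ} := by
    ext y
    simp only [mem_filter, mem_Ioc]
    constructor
    · rintro ⟨hy, hym⟩
      exact ⟨⟨Nat.pos_of_ne_zero (by rintro rfl; exact hγ hy), hym⟩, hy⟩
    · rintro ⟨⟨-, hym⟩, hy⟩
      exact ⟨hy, hym⟩
  rw [level, hfilter, natCast_card_filter]
  have hstep : ∀ x ∈ Ioc 0 m,
      (if x ∈ γ then 1 else -1 : ℤ) = 2 * (if x ∈ γ then 1 else 0) - 1 := by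
    intro x _; split_ifs <;> norm_num
  rw [sum_congr rfl hstep, sum_sub_distrib, ← mul_sum]
  simp

lemma natCount_eq_card_iff {γ : Finset ℕ} (hγ : 0 ∉ γ) :
    natCount γ = #γ ↔ ∀ x ∈ γ, level γ x ≠ 0 := by
  rw [natCount_eq_card_filter, card_filter_eq_iff]
  refine forall₂_congr fun x _ => ?_
  rw [level_eq_two_mul_card_sub hγ]
  omega

lemma level_of_subset_Icc {n : ℕ} {γ : Finset ℕ} (hγ : γ ⊆ Icc 1 n) :
    level γ n = 2 * #γ - n := by
  rw [level_eq_two_mul_card_sub (fun h => by simpa using hγ h),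
    filter_true_of_mem fun x hx => (mem_Icc.1 (hγ hx)).2]

def lastZero (n : ℕ) (γ : Finset ℕ) : ℕ := Nat.findGreatest (fun m => level γ m = 0) n

lemma level_lastZero (n : ℕ) (γ : Finset ℕ) : level γ (lastZero n γ) = 0 :=
  Nat.findGreatest_spec (P := fun m => level γ m = 0) (Nat.zero_le n) (level_zero γ)

lemma level_ne_zero_of_lastZero_lt {n m : ℕ} {γ : Finset ℕ} (h : lastZero n γ < m)
    (hm : m ≤ n) : level γ m ≠ 0 :=
  Nat.findGreatest_is_greatest h hm

def reflect (n : ℕ) (γ : Finset ℕ) : Finset ℕ := symmDiff γ (Ioc (lastZero n γ) n)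

lemma level_symmDiff_Ioc_of_le {t n m : ℕ} (γ : Finset ℕ) (hm : m ≤ t) :
    level (symmDiff γ (Ioc t n)) m = level γ m := by
  refine sum_congr rfl fun x hx => ?_
  have : x ∉ Ioc t n := fun h => by simp only [mem_Ioc] at hx h; omega
  simp [mem_symmDiff, this]

lemma level_symmDiff_Ioc_of_ge {t n m : ℕ} {γ : Finset ℕ} (hγ : level γ t = 0) (ht : t ≤ m)
    (hm : m ≤ n) :
    level (symmDiff γ (Ioc t n)) m = - level γ m := by
  have split (δ : Finset ℕ) :
      level δ m = level δ t + ∑ x ∈ Ioc t m, if x ∈ δ then 1 else -1 :=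
    (sum_Ioc_consecutive _ (Nat.zero_le t) ht).symm
  have flip : ∀ x ∈ Ioc t m, (if x ∈ symmDiff γ (Ioc t n) then 1 else -1 : ℤ) =
      - if x ∈ γ then 1 else -1 := by
    intro x hx
    have : x ∈ Ioc t n := by simp only [mem_Ioc] at hx ⊢; omega
    by_cases h : x ∈ γ <;> simp [mem_symmDiff, this, h]
  rw [split, split γ, level_symmDiff_Ioc_of_le γ le_rfl, sum_congr rfl flip, sum_neg_distrib, hγ]
  ring

lemma level_reflect_eq_zero_iff {n m : ℕ} (γ : Finset ℕ) (hm : m ≤ n) :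
    level (reflect n γ) m = 0 ↔ level γ m = 0 := by
  rcases le_total m (lastZero n γ) with h | h
  · rw [reflect, level_symmDiff_Ioc_of_le γ h]
  · rw [reflect, level_symmDiff_Ioc_of_ge (level_lastZero n γ) h hm, neg_eq_zero]

lemma lastZero_reflect (n : ℕ) (γ : Finset ℕ) : lastZero n (reflect n γ) = lastZero n γ := by
  refine Nat.findGreatest_eq_iff.2 ⟨Nat.findGreatest_le n, fun h0 => ?_, fun m hm hmn => ?_⟩
  · exact (level_reflect_eq_zero_iff γ (Nat.findGreatest_le n)).2 (level_lastZero n γ)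
  · rw [level_reflect_eq_zero_iff γ hmn]
    exact level_ne_zero_of_lastZero_lt hm hmn

lemma reflect_reflect (n : ℕ) (γ : Finset ℕ) : reflect n (reflect n γ) = γ := by
  rw [reflect, lastZero_reflect, reflect, symmDiff_symmDiff_cancel_right]

variable {n : ℕ} {γ : Finset ℕ}

lemma reflect_subset_Icc (hγ : γ ⊆ Icc 1 n) : reflect n γ ⊆ Icc 1 n := by
  refine symmDiff_le_sup.trans (union_subset hγ fun x hx => ?_)
  simp only [mem_Ioc, mem_Icc] at hx ⊢
  omega

lemma card_reflect_add_card (hγ : γ ⊆ Icc 1 n) : #(reflect n γ) + #γ = n := by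
  have h := level_symmDiff_Ioc_of_ge (level_lastZero n γ) (Nat.findGreatest_le n) le_rfl
  rw [← reflect, level_of_subset_Icc hγ, level_of_subset_Icc (reflect_subset_Icc hγ)] at h
  omega

lemma level_reflect_ne_zero (hγ : γ ⊆ Icc 1 n) (hfree : ∀ x ∈ γ, level γ x ≠ 0) :
    ∀ x ∈ reflect n γ, level (reflect n γ) x ≠ 0 := by
  intro x hx
  have hxn : x ≤ n := (mem_Icc.1 (reflect_subset_Icc hγ hx)).2
  rw [Ne, level_reflect_eq_zero_iff γ hxn]
  rcases le_or_gt x (lastZero n γ) with h | h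
  · have hxγ : x ∈ γ := by
      rcases mem_symmDiff.1 hx with hx | hx
      · exact hx.1
      · exact absurd (mem_Ioc.1 hx.1).1 h.not_gt
    exact hfree x hxγ
  · exact level_ne_zero_of_lastZero_lt h hxn

def noneAtHome (n s : ℕ) : Finset (Finset ℕ) :=
  {γ ∈ powersetCard s (Icc 1 n) | ∀ x ∈ γ, level γ x ≠ 0}

lemma T_self_eq_card_noneAtHome (n s : ℕ) : T n s s = #(noneAtHome n s) := by
  refine congrArg card (filter_congr fun γ hγ => ?_)
  obtain ⟨hsub, rfl⟩ := mem_powersetCard.1 hγ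
  exact natCount_eq_card_iff fun h => by simpa using hsub h

lemma reflect_mem_noneAtHome {s : ℕ} (h : γ ∈ noneAtHome n s) :
    reflect n γ ∈ noneAtHome n (n - s) := by
  obtain ⟨hmem, hfree⟩ := mem_filter.1 h
  obtain ⟨hsub, rfl⟩ := mem_powersetCard.1 hmem
  refine mem_filter.2
    ⟨mem_powersetCard.2 ⟨reflect_subset_Icc hsub, ?_⟩, level_reflect_ne_zero hsub hfree⟩
  have := card_reflect_add_card hsub
  omega

lemma T_self_eq_T_sub_self {n s : ℕ} (hs : s ≤ n) : T n s s = T n (n - s) (n - s) := by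
  rw [T_self_eq_card_noneAtHome, T_self_eq_card_noneAtHome]
  refine card_bij' (fun γ _ => reflect n γ) (fun γ _ => reflect n γ)
    (fun γ hγ => reflect_mem_noneAtHome hγ) (fun γ hγ => ?_)
    (fun γ _ => reflect_reflect n γ) (fun γ _ => reflect_reflect n γ)
  simpa [Nat.sub_sub_self hs] using reflect_mem_noneAtHome hγ

lemma noneAtHome_two_mul (s : ℕ) : noneAtHome (2 * s) s = noneAtHome (2 * s - 1) s := by
  ext γ
  simp only [noneAtHome, mem_filter, mem_powersetCard, and_congr_left_iff]
  intro hfree hcard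
  constructor
  · intro hsub x hx
    have hx' := mem_Icc.1 (hsub hx)
    have : x ≠ 2 * s := by
      rintro rfl
      exact hfree _ hx (by rw [level_of_subset_Icc hsub, hcard]; push_cast; ring)
    exact mem_Icc.2 ⟨hx'.1, by omega⟩
  · exact fun hsub => hsub.trans (Icc_subset_Icc_right (by omega))

end Configuration

open Configuration

theorem stmt4 (i : ℕ) (hi : 1 ≤ i) :
    T (2 * i) i i = T (2 * i - 1) (i - 1) (i - 1) := by
  calc T (2 * i) i i = T (2 * i - 1) i i := by
        rw [T_self_eq_card_noneAtHome, T_self_eq_card_noneAtHome, noneAtHome_two_mul]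
    _ = T (2 * i - 1) (2 * i - 1 - i) (2 * i - 1 - i) := T_self_eq_T_sub_self (by omega)
    _ = T (2 * i - 1) (i - 1) (i - 1) := by rw [show 2 * i - 1 - i = i - 1 by omega]
end

section
/- For l > 0, the number of l-element subsets γ = {γ₁ < ... < γ_l} of {1,...,2l} with exactly l−1 indices j satisfying γⱼ ≠ 2j equals the number of (l−1)-element subsets δ of {1,...,2l} with exactly l−1 indices j satisfying δⱼ ≠ 2j. That is, T(2l, l, l−1) = T(2l, l−1, l−1). -/
/-!
Read `s ⊆ {1,…,n}` as a lattice path with an up-step at each mark and a down-step elsewhere.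
A mark is at home exactly when the path reaches level `0` there, i.e. the homes are the up-steps
from level `-1` to level `0`. Let `k` be the last time the path is at level `-1`. Toggling `k + 1`
and complementing `s` above `k + 1` reflects the rest of the path in level `-1`: the reflected path
has the same last visit `k`, the home at `k + 1` appears or disappears, and no home lies beyond
`k + 1` in either path. For `n = 2l`, a path with `l` marks and one home ends at level `0`, so it
has a last visit to `-1` and its home is at `k + 1`; a path with `l - 1` marks and no home ends at
level `-2`, so it visits `-1` and `k + 1` is not a mark. The reflection exchanges these two
families.
-/

open Finset

/-- The `j`-th mark `x` of `s` has `Nat.count (· ∈ s) (x + 1) = j`, so it is at home iff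
`height s x = 0`. -/
def height (s : Finset ℕ) (x : ℕ) : ℤ := 2 * Nat.count (· ∈ s) (x + 1) - x

def homes (s : Finset ℕ) : Finset ℕ := {x ∈ s | height s x = 0}

lemma exists_lt_le_succ_of_lt_of_le {f : ℕ → ℤ} {a b : ℕ} {k : ℤ} (hab : a ≤ b)
    (ha : f a < k) (hb : k ≤ f b) : ∃ y, a ≤ y ∧ y < b ∧ f y < k ∧ k ≤ f (y + 1) := by
  induction b, hab using Nat.le_induction with
  | base => omega
  | succ b hab ih =>
    by_cases h : k ≤ f b
    · obtain ⟨y, hay, hyb, hy⟩ := ih h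
      exact ⟨y, hay, by omega, hy⟩
    · exact ⟨b, hab, by omega, by omega, hb⟩

lemma Finset.nth_mem_eq_getD_sort (s : Finset ℕ) (j : ℕ) :
    Nat.nth (· ∈ s) j = (s.sort (· ≤ ·)).getD j 0 := by
  have hf : (Set.ofPred (· ∈ s)).Finite := s.finite_toSet
  rw [Nat.nth_eq_getD_sort hf]
  congr
  ext
  simp

section Height

variable {s t : Finset ℕ} {n x : ℕ}

lemma height_succ (s : Finset ℕ) (x : ℕ) :
    height s (x + 1) = height s x + if x + 1 ∈ s then 1 else -1 := by
  simp only [height, Nat.count_succ _ (x + 1)]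
  split_ifs <;> push_cast <;> ring

lemma height_zero (h : 0 ∉ s) : height s 0 = 0 := by
  simp [height, Nat.count_one, h]

lemma height_congr (h : ∀ y ≤ x, y ∈ s ↔ y ∈ t) : height s x = height t x := by
  simp only [height, Nat.count_eq_card_filter_range]
  rw [filter_congr fun y hy => h y (Nat.lt_succ_iff.mp (mem_range.mp hy))]

lemma height_of_subset_Icc (h : s ⊆ Icc 1 n) : height s n = 2 * #s - n := by
  have hsub : s ⊆ range (n + 1) := fun x hx => by
    have := mem_Icc.mp (h hx); exact mem_range.mpr (by omega)
  rw [height, Nat.count_eq_card_filter_range, filter_mem_eq_inter, inter_eq_right.mpr hsub]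

lemma natCount_eq_card_filter (s : Finset ℕ) : natCount s = #{x ∈ s | height s x ≠ 0} := by
  have hf : (Set.ofPred (· ∈ s)).Finite := s.finite_toSet
  have hcard : #hf.toFinset = #s := by congr; ext; simp
  have hcount (x) (hx : x ∈ s) : Nat.count (· ∈ s) (x + 1) = Nat.count (· ∈ s) x + 1 :=
    Nat.count_succ_eq_succ_count_iff.mpr hx
  unfold natCount
  refine card_nbij' (Nat.nth (· ∈ s)) (Nat.count (· ∈ s)) ?_ ?_ ?_ ?_
  · intro j hj
    simp only [coe_filter, mem_range, Set.mem_ofPred_eq, ← s.nth_mem_eq_getD_sort] at hj ⊢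
    have hj' : j < #hf.toFinset := hcard ▸ hj.1
    refine ⟨Nat.nth_mem_of_lt_card hf hj', ?_⟩
    rw [height, Nat.count_nth_succ fun _ => hj']
    omega
  · intro x hx
    simp only [coe_filter, mem_range, Set.mem_ofPred_eq, ← s.nth_mem_eq_getD_sort] at hx ⊢
    refine ⟨hcard ▸ Nat.count_lt_card hf hx.1, ?_⟩
    rw [Nat.nth_count hx.1]
    have := hx.2
    rw [height, hcount x hx.1] at this
    omega
  · intro j hj
    simp only [coe_filter, mem_range, Set.mem_ofPred_eq] at hj
    exact Nat.count_nth_of_lt_card_finite hf (hcard ▸ hj.1)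
  · intro x hx
    exact Nat.nth_count (mem_filter.mp hx).1

lemma natCount_add_card_homes (s : Finset ℕ) : natCount s + #(homes s) = #s := by
  rw [natCount_eq_card_filter, homes, add_comm]
  exact card_filter_add_card_filter_not _

end Height

section Path

variable {s : Finset ℕ} {n k x : ℕ}

/-- The last `x < n` with `height s x = -1`, or `0` if there is none. -/
def lastDip (n : ℕ) (s : Finset ℕ) : ℕ := {x ∈ range n | height s x = -1}.sup id

lemma succ_mem_homes_of_height_neg (h : height s x < 0) (h' : 0 ≤ height s (x + 1)) :
    x + 1 ∈ homes s := by
  rw [height_succ] at h'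
  split_ifs at h' with hx
  · exact mem_filter.mpr ⟨hx, by rw [height_succ, if_pos hx]; omega⟩
  · omega

lemma height_succ_eq_neg_one (h : -1 < height s x) (h' : height s (x + 1) ≤ -1) :
    height s (x + 1) = -1 := by
  rw [height_succ] at h' ⊢
  split_ifs at h' ⊢ <;> omega

lemma le_lastDip (hx : x < n) (h : height s x = -1) : x ≤ lastDip n s :=
  le_sup (f := id) (mem_filter.mpr ⟨mem_range.mpr hx, h⟩)

lemma lastDip_eq (hk : k < n) (h : height s k = -1)
    (hlast : ∀ x, k < x → x < n → height s x ≠ -1) : lastDip n s = k := by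
  refine le_antisymm (Finset.sup_le fun x hx => ?_) (le_lastDip hk h)
  obtain ⟨hxn, hx⟩ := mem_filter.mp hx
  by_contra hkx
  exact hlast x (by simpa using hkx) (mem_range.mp hxn) hx

lemma lastDip_spec (hx : x < n) (h : height s x = -1) :
    lastDip n s < n ∧ height s (lastDip n s) = -1 := by
  have hne : ({x ∈ range n | height s x = -1} : Finset ℕ).Nonempty :=
    ⟨x, mem_filter.mpr ⟨mem_range.mpr hx, h⟩⟩
  obtain ⟨y, hy, hdip⟩ := exists_mem_eq_sup _ hne id
  obtain ⟨hyn, hy⟩ := mem_filter.mp hy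
  have hdip' : lastDip n s = y := hdip
  exact ⟨hdip' ▸ mem_range.mp hyn, hdip' ▸ hy⟩

lemma le_lastDip_succ_of_mem_homes (hs : s ⊆ Icc 1 n) (hx : x ∈ homes s) :
    x ≤ lastDip n s + 1 := by
  obtain ⟨hxs, hx0⟩ := mem_filter.mp hx
  have hx1n := mem_Icc.mp (hs hxs)
  obtain ⟨y, rfl⟩ : ∃ y, x = y + 1 := ⟨x - 1, by omega⟩
  rw [height_succ, if_pos hxs] at hx0
  have := le_lastDip (n := n) (s := s) (by omega) (by omega : height s y = -1)
  omega

end Path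

section Flip

variable {s t : Finset ℕ} {n m k x : ℕ}

def complAbove (n m : ℕ) (s : Finset ℕ) : Finset ℕ := {x ∈ s | x < m} ∪ (Ioc m n \ s)

structure IsFlip (n m : ℕ) (s t : Finset ℕ) : Prop where
  mem_iff_of_lt : ∀ x < m, x ∈ s ↔ x ∈ t
  mem_left : m ∈ s
  not_mem_right : m ∉ t
  mem_iff_not_mem : ∀ x, m < x → x ≤ n → (x ∈ s ↔ x ∉ t)

lemma mem_complAbove :
    x ∈ complAbove n m s ↔ x ∈ s ∧ x < m ∨ m < x ∧ x ≤ n ∧ x ∉ s := by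
  simp [complAbove, and_assoc]

lemma complAbove_subset (hs : s ⊆ Icc 1 n) : complAbove n m s ⊆ Icc 1 n := by
  intro x hx
  rcases mem_complAbove.mp hx with ⟨hxs, -⟩ | ⟨hmx, hxn, -⟩
  · exact hs hxs
  · exact mem_Icc.mpr ⟨by omega, hxn⟩

lemma complAbove_complAbove (hs : s ⊆ Icc 1 n) :
    complAbove n m (complAbove n m s) = s.erase m := by
  ext x
  have := @hs x
  simp only [mem_complAbove, mem_erase, mem_Icc] at this ⊢
  by_cases hxs : x ∈ s
  · simp only [hxs, true_and, not_true_eq_false, and_false, or_false, and_true, true_imp_iff]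
      at this ⊢
    omega
  · simp only [hxs, false_and, not_false_eq_true, and_true, false_or, and_false, iff_false]
    omega

lemma complAbove_insert_self : complAbove n m (insert m s) = complAbove n m s := by
  ext x
  simp only [mem_complAbove, mem_insert]
  by_cases hxs : x ∈ s
  · simp only [hxs, or_true, true_and, not_true_eq_false, and_false, or_false]
  · simp only [hxs, or_false, false_and, false_or, not_false_eq_true, and_true]
    omega

lemma isFlip_complAbove (hm : m ∈ s) : IsFlip n m s (complAbove n m s) where
  mem_iff_of_lt x hx := by simp [mem_complAbove, hx, hx.not_gt]
  mem_left := hm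
  not_mem_right := by simp [mem_complAbove]
  mem_iff_not_mem x hmx hxn := by simp [mem_complAbove, hmx, hxn, hmx.not_gt]

lemma isFlip_insert_complAbove (hm : m ∉ s) : IsFlip n m (insert m (complAbove n m s)) s where
  mem_iff_of_lt x hx := by simp [mem_complAbove, hx, hx.ne, hx.not_gt]
  mem_left := mem_insert_self m _
  not_mem_right := hm
  mem_iff_not_mem x hmx hxn := by simp [mem_complAbove, hmx, hxn, hmx.not_gt, hmx.ne']

namespace IsFlip

lemma height_eq_of_le (hf : IsFlip n (k + 1) s t) (hx : x ≤ k) : height s x = height t x :=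
  height_congr fun y hy => hf.mem_iff_of_lt y (by omega)

lemma height_add_height (hf : IsFlip n (k + 1) s t) (hk : height s k = -1) (hx : k < x)
    (hxn : x ≤ n) : height s x + height t x = -2 := by
  induction x, (hx : k + 1 ≤ x) using Nat.le_induction with
  | base =>
    rw [height_succ, height_succ, if_pos hf.mem_left, if_neg hf.not_mem_right,
      ← hf.height_eq_of_le le_rfl, hk]
    norm_num
  | succ x hx ih =>
    have := ih (by omega)
    rw [height_succ, height_succ]
    have := hf.mem_iff_not_mem (x + 1) (by omega) hxn
    split_ifs <;> first | linarith | tauto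

lemma lastDip_eq_lastDip (hf : IsFlip n (k + 1) s t) (hk : height s k = -1) :
    lastDip n s = lastDip n t := by
  unfold lastDip
  congr 1
  refine filter_congr fun x hx => ?_
  rcases le_or_gt x k with hxk | hkx
  · rw [hf.height_eq_of_le hxk]
  · have := hf.height_add_height hk hkx (mem_range.mp hx).le
    omega

lemma card_add_card (hf : IsFlip n (k + 1) s t) (hk : height s k = -1) (hkn : k < n)
    (hs : s ⊆ Icc 1 n) (ht : t ⊆ Icc 1 n) : #s + #t + 1 = n := by
  have := hf.height_add_height hk hkn le_rfl
  rw [height_of_subset_Icc hs, height_of_subset_Icc ht] at this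
  omega

lemma card_homes (hf : IsFlip n (k + 1) s t) (hk : height s k = -1) (hdip : lastDip n s = k)
    (hs : s ⊆ Icc 1 n) (ht : t ⊆ Icc 1 n) :
    #(homes s) = #(homes t) + 1 := by
  have hdip' : lastDip n t = k := hf.lastDip_eq_lastDip hk ▸ hdip
  have hhomes : homes s = insert (k + 1) (homes t) := by
    ext x
    rw [mem_insert]
    rcases lt_trichotomy x (k + 1) with hxk | rfl | hkx
    · simp only [homes, mem_filter, hf.mem_iff_of_lt x hxk,
        hf.height_eq_of_le (by omega : x ≤ k), hxk.ne, false_or]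
    · simp only [homes, mem_filter, hf.mem_left, height_succ, hk, true_or]
      norm_num
    · have hs' := mt (le_lastDip_succ_of_mem_homes (x := x) hs) (by omega)
      have ht' := mt (le_lastDip_succ_of_mem_homes (x := x) ht) (by omega)
      simp only [hkx.ne', false_or]
      exact iff_of_false hs' ht'
  exact hhomes ▸ card_insert_of_notMem fun h => hf.not_mem_right (mem_filter.mp h).1

end IsFlip

end Flip

section Pivot

variable {s : Finset ℕ} {n : ℕ}

lemma lastDip_spec_of_card_homes_eq_one (hs : s ⊆ Icc 1 n) (hn : n ≤ 2 * #s)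
    (h : #(homes s) = 1) :
    lastDip n s < n ∧ height s (lastDip n s) = -1 ∧ lastDip n s + 1 ∈ s := by
  obtain ⟨m, hm⟩ := card_eq_one.mp h
  obtain ⟨hms, hm0⟩ := mem_filter.mp (hm ▸ mem_singleton_self m : m ∈ homes s)
  have hm1n := mem_Icc.mp (hs hms)
  obtain ⟨k, rfl⟩ : ∃ k, m = k + 1 := ⟨m - 1, by omega⟩
  rw [height_succ, if_pos hms] at hm0
  have hk : height s k = -1 := by omega
  suffices lastDip n s = k by exact this ▸ ⟨by omega, hk, hms⟩
  refine lastDip_eq (by omega) hk fun x hkx hxn hx => ?_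
  have hend : 0 ≤ height s n := by rw [height_of_subset_Icc hs]; omega
  obtain ⟨y, hxy, -, hy, hy'⟩ :=
    exists_lt_le_succ_of_lt_of_le (f := height s) hxn.le (by omega : height s x < 0) hend
  have := hm ▸ succ_mem_homes_of_height_neg hy hy'
  simp only [mem_singleton] at this
  omega

lemma lastDip_spec_of_homes_eq_empty (hs : s ⊆ Icc 1 n) (hn : 2 * #s + 2 ≤ n)
    (h : homes s = ∅) :
    lastDip n s < n ∧ height s (lastDip n s) = -1 ∧ lastDip n s + 1 ∉ s := by
  have h0 : height s 0 = 0 := height_zero fun h0 => by simpa using hs h0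
  have hend : height s n ≤ -2 := by rw [height_of_subset_Icc hs]; omega
  obtain ⟨y, -, hyn, hy, hy'⟩ :=
    exists_lt_le_succ_of_lt_of_le (f := fun x => -height s x) (k := 1) (Nat.zero_le n)
      (by simp [h0]) (by omega)
  have hy1 : height s (y + 1) = -1 := height_succ_eq_neg_one (by omega) (by omega)
  have hyn' : y + 1 < n := by
    refine (Nat.succ_le_of_lt hyn).lt_of_ne fun (heq : y + 1 = n) => ?_
    rw [heq] at hy1
    omega
  obtain ⟨hkn, hk⟩ := lastDip_spec hyn' hy1
  refine ⟨hkn, hk, fun hmem => ?_⟩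
  have : lastDip n s + 1 ∈ homes s :=
    succ_mem_homes_of_height_neg (by omega) (by rw [height_succ, if_pos hmem]; omega)
  simp [h] at this

end Pivot

section Counting

variable {n a h : ℕ} {γ δ : Finset ℕ}

def withHomes (n a h : ℕ) : Finset (Finset ℕ) :=
  {γ ∈ (Icc 1 n).powersetCard a | #(homes γ) = h}

lemma mem_withHomes :
    γ ∈ withHomes n a h ↔ γ ⊆ Icc 1 n ∧ #γ = a ∧ #(homes γ) = h := by
  simp [withHomes, mem_powersetCard, and_assoc]

lemma T_eq_card_withHomes (hh : h ≤ a) : T n a (a - h) = #(withHomes n a h) := by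
  unfold T withHomes
  refine congrArg card (filter_congr fun γ hγ => ?_)
  have := natCount_add_card_homes γ
  rw [(mem_powersetCard.mp hγ).2] at this
  omega

lemma complAbove_mem_withHomes (hn : n ≤ 2 * a) (hγ : γ ∈ withHomes n a 1) :
    complAbove n (lastDip n γ + 1) γ ∈ withHomes n (n - 1 - a) 0 := by
  obtain ⟨hs, hcard, hhomes⟩ := mem_withHomes.mp hγ
  obtain ⟨hkn, hk, hmem⟩ := lastDip_spec_of_card_homes_eq_one hs (hcard ▸ hn) hhomes
  have hf := isFlip_complAbove (n := n) hmem
  have ht := complAbove_subset (m := lastDip n γ + 1) hs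
  have := hf.card_add_card hk hkn hs ht
  have := hf.card_homes hk rfl hs ht
  exact mem_withHomes.mpr ⟨ht, by omega, by omega⟩

lemma insert_complAbove_mem_withHomes (hn : 2 * a + 2 ≤ n) (hδ : δ ∈ withHomes n a 0) :
    insert (lastDip n δ + 1) (complAbove n (lastDip n δ + 1) δ) ∈
      withHomes n (n - 1 - a) 1 := by
  obtain ⟨hs, hcard, hhomes⟩ := mem_withHomes.mp hδ
  obtain ⟨hkn, hk, hmem⟩ :=
    lastDip_spec_of_homes_eq_empty hs (hcard ▸ hn) (card_eq_zero.mp hhomes)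
  have hf := isFlip_insert_complAbove (n := n) hmem
  have ht : insert (lastDip n δ + 1) (complAbove n (lastDip n δ + 1) δ) ⊆ Icc 1 n :=
    insert_subset (mem_Icc.mpr ⟨by omega, by omega⟩) (complAbove_subset hs)
  have hk' := hf.height_eq_of_le le_rfl ▸ hk
  have := hf.card_add_card hk' hkn ht hs
  have := hf.card_homes hk' (hf.lastDip_eq_lastDip hk') ht hs
  exact mem_withHomes.mpr ⟨ht, by omega, by omega⟩

theorem card_withHomes_one (hn : n ≤ 2 * a) (ha : a < n) :
    #(withHomes n a 1) = #(withHomes n (n - 1 - a) 0) := by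
  refine card_nbij' (fun γ => complAbove n (lastDip n γ + 1) γ)
    (fun δ => insert (lastDip n δ + 1) (complAbove n (lastDip n δ + 1) δ))
    (fun γ hγ => complAbove_mem_withHomes hn hγ)
    (fun δ hδ => (by omega : n - 1 - (n - 1 - a) = a) ▸
      insert_complAbove_mem_withHomes (by omega) hδ) ?_ ?_
  · intro γ hγ
    obtain ⟨hs, hcard, hhomes⟩ := mem_withHomes.mp hγ
    obtain ⟨-, hk, hmem⟩ := lastDip_spec_of_card_homes_eq_one hs (hcard ▸ hn) hhomes
    simp only [← (isFlip_complAbove (n := n) hmem).lastDip_eq_lastDip hk,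
      complAbove_complAbove hs, insert_erase hmem]
  · intro δ hδ
    obtain ⟨hs, hcard, hhomes⟩ := mem_withHomes.mp hδ
    obtain ⟨-, hk, hmem⟩ :=
      lastDip_spec_of_homes_eq_empty hs (by omega) (card_eq_zero.mp hhomes)
    have hf := isFlip_insert_complAbove (n := n) hmem
    simp only [hf.lastDip_eq_lastDip (hf.height_eq_of_le le_rfl ▸ hk), complAbove_insert_self,
      complAbove_complAbove hs, erase_eq_of_notMem hmem]

end Counting

theorem stmt8 (l : ℕ) (hl : 0 < l) :
    T (2 * l) l (l - 1) = T (2 * l) (l - 1) (l - 1) := by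
  have hsize : 2 * l - 1 - l = l - 1 := by omega
  have h0 := T_eq_card_withHomes (n := 2 * l) (a := l - 1) (h := 0) (Nat.zero_le _)
  rw [Nat.sub_zero] at h0
  rw [T_eq_card_withHomes (by omega), h0, card_withHomes_one le_rfl (by omega), hsize]
end
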